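/- Define Θ(p,q) = 2·arctan( −sin((p−q)/2) / (cos((p+q)/2) + cos((p−q)/2)) ) for real p, q with the denominator nonzero (as holds for p, q ∈ (−π, π)). Then for every fixed q ∈ (−π, π), as ε → 0 with ε > 0: Θ(−π+ε, q) = π − 2ε + ε²·tan(q/2) + O(ε³) and Θ(π−ε, q) = −π + 2ε + ε²·tan(q/2) + O(ε³) (eq. (5.20), the expansion of the scattering phase near the boundary momenta ∓π). -/

import Mathlib

open Asymptotics

/-- The two-body scattering phase of the antiferromagnetic XXX chain:
`Θ(p,q) = 2·arctan( −sin((p−q)/2) / (cos((p+q)/2) + cos((p−q)/2)) )`. -/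
noncomputable def Theta (p q : ℝ) : ℝ :=
  2 * Real.arctan (-Real.sin ((p - q) / 2) / (Real.cos ((p + q) / 2) + Real.cos ((p - q) / 2)))

/-!
With `t = tan(ε/2)` and `T = tan(q/2)`, the addition formulas turn the argument of the arctangent
in `Θ(−π+ε, q)` into `1/y` with `y = 2t/(1 + tT) > 0`, so `Θ(−π+ε, q) = π − 2·arctan y`.
Now `y = 2t − 2Tt² + O(t³)`, `arctan y = y + O(y³)` and `t = ε/2 + O(ε³)`. The expansion at
`π − ε` is the one at `−π + ε` for `−q`, because `Θ(−p, −q) = −Θ(p, q)`.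
-/

open Real Filter Topology Set

namespace Real

theorem sin_sub_self_isBigO : (fun x => sin x - x) =O[𝓝 0] (· ^ 3) :=
  isBigO_of_le' (c := 1 / 6) _ fun x => by
    simpa [abs_sub_comm, div_eq_inv_mul, mul_comm] using abs_sub_sin_le x

theorem one_sub_cos_isBigO : (fun x => 1 - cos x) =O[𝓝 0] (· ^ 2) :=
  isBigO_of_le' (c := 1 / 2) _ fun x => by
    rw [Real.norm_eq_abs, Real.norm_eq_abs, abs_of_nonneg (sub_nonneg.2 (cos_le_one x)),
      abs_of_nonneg (sq_nonneg x)]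
    linarith [one_sub_sq_div_two_le_cos (x := x)]

theorem tan_sub_self_isBigO : (fun x => tan x - x) =O[𝓝 0] (· ^ 3) := by
  have hsec : (fun x => (cos x)⁻¹) =O[𝓝 0] (fun _ => (1 : ℝ)) :=
    ((continuous_cos.tendsto 0).inv₀ (by simp)).isBigO_one ℝ
  have hnum : (fun x => (sin x - x) + x * (1 - cos x)) =O[𝓝 0] (· ^ 3) :=
    sin_sub_self_isBigO.add <| by
      simpa [pow_succ'] using (isBigO_refl (fun x : ℝ => x) _).mul one_sub_cos_isBigO
  refine (hnum.mul hsec).congr' ?_ (by simp)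
  filter_upwards [(continuous_cos.tendsto 0).eventually_ne (by simp : cos 0 ≠ 0)] with x hx
  rw [tan_eq_sin_div_cos]
  field_simp
  ring

theorem arctan_sub_self_isBigO : (fun x => arctan x - x) =O[𝓝 0] (· ^ 3) := by
  have harctan : (fun x => arctan x) =O[𝓝 0] fun x => x := by
    simpa using (hasDerivAt_arctan 0).isBigO_sub
  -- `arctan x - x = -(tan θ - θ)` for `θ = arctan x`
  refine ((tan_sub_self_isBigO.comp_tendsto (by simpa using continuous_arctan.tendsto 0)).trans
    (harctan.pow 3)).neg_left.congr (fun x => ?_) (fun _ => rfl)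
  simp [tan_arctan]

theorem arctan_two_mul_div_one_add_mul_sub_isBigO (T : ℝ) :
    (fun t => arctan (2 * t / (1 + t * T)) - (2 * t - 2 * T * t ^ 2)) =O[𝓝 0] (· ^ 3) := by
  have hden : Tendsto (fun t : ℝ => 1 + t * T) (𝓝 0) (𝓝 1) := by
    have : Continuous fun t : ℝ => 1 + t * T := by fun_prop
    simpa using this.tendsto 0
  have hinv : (fun t : ℝ => (1 + t * T)⁻¹) =O[𝓝 0] (fun _ => (1 : ℝ)) :=
    (hden.inv₀ one_ne_zero).isBigO_one ℝ
  have hy : (fun t => 2 * t / (1 + t * T)) =O[𝓝 0] fun t => t := by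
    simpa [div_eq_mul_inv, mul_assoc] using
      ((isBigO_refl (fun t : ℝ => t) _).mul hinv).const_mul_left 2
  have hrem : (fun t => 2 * t / (1 + t * T) - (2 * t - 2 * T * t ^ 2)) =O[𝓝 0] (· ^ 3) := by
    refine (((isBigO_refl (· ^ 3) _).const_mul_left (2 * T ^ 2)).mul hinv).congr' ?_ (by simp)
    filter_upwards [hden.eventually_ne one_ne_zero] with t ht
    rw [mul_comm t T] at ht ⊢
    field_simp
    ring
  exact ((arctan_sub_self_isBigO.comp_tendsto (hy.trans_tendsto tendsto_id)).trans
    (hy.pow 3)).add hrem |>.congr (fun t => by simp) (fun _ => rfl)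

end Real

theorem theta_neg_neg (p q : ℝ) : Theta (-p) (-q) = -Theta p q := by
  simp only [Theta, show (-p - -q) / 2 = -((p - q) / 2) by ring,
    show (-p + -q) / 2 = -((p + q) / 2) by ring, sin_neg, cos_neg, neg_neg, neg_div, arctan_neg]
  ring

theorem theta_neg_pi_add {q ε : ℝ} (hq : q ∈ Ioo (-π) π) (hε : ε ∈ Ioo 0 π) (hεq : ε < π + q) :
    Theta (-π + ε) q = π - 2 * arctan (2 * tan (ε / 2) / (1 + tan (ε / 2) * tan (q / 2))) := by
  obtain ⟨hq₁, hq₂⟩ := hq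
  obtain ⟨hε₀, hεπ⟩ := hε
  have hsa : 0 < sin (ε / 2) := sin_pos_of_pos_of_lt_pi (by linarith) (by linarith)
  have hca : 0 < cos (ε / 2) := cos_pos_of_mem_Ioo ⟨by linarith, by linarith⟩
  have hcb : 0 < cos (q / 2) := cos_pos_of_mem_Ioo ⟨by linarith, by linarith⟩
  have hcab : 0 < cos (ε / 2 - q / 2) := cos_pos_of_mem_Ioo ⟨by linarith, by linarith⟩
  have hy : 2 * tan (ε / 2) / (1 + tan (ε / 2) * tan (q / 2))
      = 2 * sin (ε / 2) * cos (q / 2) / cos (ε / 2 - q / 2) := by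
    rw [tan_eq_sin_div_cos, tan_eq_sin_div_cos, cos_sub]
    field_simp
  have harg : -sin ((-π + ε - q) / 2) / (cos ((-π + ε + q) / 2) + cos ((-π + ε - q) / 2))
      = (2 * sin (ε / 2) * cos (q / 2) / cos (ε / 2 - q / 2))⁻¹ := by
    rw [show (-π + ε - q) / 2 = ε / 2 - q / 2 - π / 2 by ring,
      show (-π + ε + q) / 2 = ε / 2 + q / 2 - π / 2 by ring, sin_sub_pi_div_two,
      cos_sub_pi_div_two, cos_sub_pi_div_two, sin_add, sin_sub, inv_div]
    ring
  rw [Theta, harg, arctan_inv_of_pos (by positivity), hy]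
  ring

theorem theta_neg_pi_add_sub_isBigO {q : ℝ} (hq : q ∈ Ioo (-π) π) :
    (fun ε => Theta (-π + ε) q - (π - 2 * ε + ε ^ 2 * tan (q / 2))) =O[𝓝[>] 0] (· ^ 3) := by
  set T := tan (q / 2)
  have hhalf : Tendsto (fun ε : ℝ => ε / 2) (𝓝 0) (𝓝 0) := by
    simpa using (continuous_id.div_const (2 : ℝ)).tendsto 0
  have hhalf_O : (fun ε : ℝ => ε / 2) =O[𝓝 0] fun ε => ε :=
    (isBigO_refl (fun ε : ℝ => ε) _).const_mul_left (1 / 2) |>.congr_left fun ε => by ring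
  have htan : (fun ε => tan (ε / 2)) =O[𝓝 0] fun ε => ε := by
    simpa using ((hasDerivAt_tan (by simp)).comp 0 ((hasDerivAt_id 0).div_const 2)).isBigO_sub
  have htan₀ : Tendsto (fun ε => tan (ε / 2)) (𝓝 0) (𝓝 0) := htan.trans_tendsto tendsto_id
  have htan_sub : (fun ε => tan (ε / 2) - ε / 2) =O[𝓝 0] (· ^ 3) :=
    (tan_sub_self_isBigO.comp_tendsto hhalf).trans (hhalf_O.pow 3)
  have harctan : (fun ε => arctan (2 * tan (ε / 2) / (1 + tan (ε / 2) * T))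
      - (2 * tan (ε / 2) - 2 * T * tan (ε / 2) ^ 2)) =O[𝓝 0] (· ^ 3) :=
    ((arctan_two_mul_div_one_add_mul_sub_isBigO T).comp_tendsto htan₀).trans (htan.pow 3)
  have hbdd : (fun ε => 1 - T * (tan (ε / 2) + ε / 2)) =O[𝓝 0] (fun _ => (1 : ℝ)) :=
    (tendsto_const_nhds.sub (tendsto_const_nhds.mul (htan₀.add hhalf))).isBigO_one ℝ
  -- `2t − 2Tt² − (ε − ε²T/2) = 2(t − ε/2)(1 − T(t + ε/2))`
  have hquad : (fun ε => (tan (ε / 2) - ε / 2) * (1 - T * (tan (ε / 2) + ε / 2)))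
      =O[𝓝 0] (· ^ 3) := by
    simpa using htan_sub.mul hbdd
  refine ((harctan.const_mul_left (-2)).add (hquad.const_mul_left (-4))).mono nhdsWithin_le_nhds
    |>.congr' ?_ EventuallyEq.rfl
  filter_upwards [Ioo_mem_nhdsGT (lt_min pi_pos (by linarith [hq.1] : 0 < π + q))] with ε hε
  rw [theta_neg_pi_add hq ⟨hε.1, hε.2.trans_le (min_le_left _ _)⟩
    (hε.2.trans_le (min_le_right _ _))]
  ring

/-- Eq. (5.20): for fixed `q ∈ (−π, π)`, as `ε → 0⁺`,
`Θ(−π+ε, q) = π − 2ε + ε²·tan(q/2) + O(ε³)` and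
`Θ(π−ε, q) = −π + 2ε + ε²·tan(q/2) + O(ε³)`. -/
theorem theta_expansion (q : ℝ) (hq : q ∈ Set.Ioo (-Real.pi) Real.pi) :
    ((fun ε : ℝ => Theta (-Real.pi + ε) q - (Real.pi - 2 * ε + ε ^ 2 * Real.tan (q / 2)))
        =O[nhdsWithin 0 (Set.Ioi 0)] fun ε : ℝ => ε ^ 3)
    ∧ ((fun ε : ℝ => Theta (Real.pi - ε) q - (-Real.pi + 2 * ε + ε ^ 2 * Real.tan (q / 2)))
        =O[nhdsWithin 0 (Set.Ioi 0)] fun ε : ℝ => ε ^ 3) := by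
  refine ⟨theta_neg_pi_add_sub_isBigO hq, ?_⟩
  have hq' : -q ∈ Ioo (-π) π := ⟨by linarith [hq.2], by linarith [hq.1]⟩
  refine (theta_neg_pi_add_sub_isBigO hq').neg_left.congr (fun ε => ?_) (fun _ => rfl)
  have hsymm := theta_neg_neg (-π + ε) (-q)
  rw [neg_neg, neg_add', neg_neg] at hsymm
  rw [hsymm, neg_div, tan_neg]
  ring
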